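/- arXiv:2502.12868 — 4 statements merged into one kernel-verified Lean document; each statement's English description precedes it below -/
import Mathlib

section
/- Let A be a commutative noetherian local ring, B an A-algebra, and M a B-module that is finitely generated as an A-module. Then the Krull dimension of M as a B-module equals the Krull dimension of M as an A-module. -/
/-!
`B ⧸ Ann_B M` acts faithfully on `M`, so it embeds into the finite `A`-algebra `End_A M` and is
therefore integral over `A`; since `Ann_A M = Ann_B M ∩ A`, it is an injective integral extension
of `A ⧸ Ann_A M`. Krull dimension is invariant under injective integral extensions:
incomparability bounds it from above, lying over together with going up from below.
-/

section IntegralExtension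

variable {R S : Type*} [CommRing R] [CommRing S] [Algebra R S] [Algebra.IsIntegral R S]

theorem ringKrullDim_le_of_isIntegral : ringKrullDim S ≤ ringKrullDim R :=
  Order.krullDim_le_of_strictMono (PrimeSpectrum.comap (algebraMap R S))
    fun _ _ h => Ideal.IsIntegral.comap_lt_comap (R := R) h

theorem ringKrullDim_le_of_isIntegral_of_faithfulSMul [FaithfulSMul R S] :
    ringKrullDim R ≤ ringKrullDim S := by
  refine iSup_le fun l => ?_
  obtain ⟨⟨P, _, _⟩⟩ := Ideal.nonempty_primesOver (S := S) l.head.asIdeal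
  obtain ⟨L, hL, -⟩ := Ideal.exists_ltSeries_of_hasGoingUp l P
  exact hL ▸ Order.LTSeries.length_le_krullDim L

theorem ringKrullDim_eq_of_isIntegral_of_faithfulSMul [FaithfulSMul R S] :
    ringKrullDim S = ringKrullDim R :=
  ringKrullDim_le_of_isIntegral.antisymm ringKrullDim_le_of_isIntegral_of_faithfulSMul

end IntegralExtension

namespace Module

variable {A B M : Type*} [CommRing A] [CommRing B] [Algebra A B]
  [AddCommGroup M] [Module A M] [Module B M] [IsScalarTower A B M]

instance annihilator_liesOver_annihilator : (annihilator B M).LiesOver (annihilator A M) :=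
  ⟨(comap_annihilator (R₀ := A)).symm⟩

variable (A B M) in
noncomputable def quotientAnnihilatorToEnd : (B ⧸ annihilator B M) →ₐ[A] End A M :=
  Ideal.Quotient.liftₐ (annihilator B M) (Algebra.lsmul A A M)
    fun _ hb => LinearMap.ext (mem_annihilator.mp hb)

theorem quotientAnnihilatorToEnd_injective :
    Function.Injective (quotientAnnihilatorToEnd A B M) := by
  rw [injective_iff_map_eq_zero]
  rintro ⟨b⟩ hb
  exact Ideal.Quotient.eq_zero_iff_mem.mpr (mem_annihilator.mpr (LinearMap.congr_fun hb))

instance [Module.Finite A M] : Algebra.IsIntegral A (B ⧸ annihilator B M) :=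
  .of_injective _ quotientAnnihilatorToEnd_injective

instance [Module.Finite A M] :
    Algebra.IsIntegral (A ⧸ annihilator A M) (B ⧸ annihilator B M) :=
  .tower_top A

end Module

theorem dim_B_eq_dim_A_general (A B M : Type*) [CommRing A]
    [CommRing B] [Algebra A B]
    [AddCommGroup M] [Module A M] [Module B M] [IsScalarTower A B M]
    [Module.Finite A M] :
    ringKrullDim (B ⧸ Module.annihilator B M) = ringKrullDim (A ⧸ Module.annihilator A M) :=
  ringKrullDim_eq_of_isIntegral_of_faithfulSMul

/-- Let `A` be a commutative noetherian local ring, `B` an `A`-algebra,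
and `M` a `B`-module that is finitely generated as an `A`-module.  Then the Krull
dimension of `M` as a `B`-module (i.e. the Krull dimension of `B ⧸ Ann_B M`) equals the
Krull dimension of `M` as an `A`-module (i.e. that of `A ⧸ Ann_A M`). -/
theorem dim_B_eq_dim_A (A B M : Type*) [CommRing A] [IsNoetherianRing A] [IsLocalRing A]
    [CommRing B] [Algebra A B]
    [AddCommGroup M] [Module A M] [Module B M] [IsScalarTower A B M]
    [Module.Finite A M] :
    ringKrullDim (B ⧸ Module.annihilator B M) = ringKrullDim (A ⧸ Module.annihilator A M) :=
  dim_B_eq_dim_A_general A B M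
end

section
/- In the algebra W = A⟨s_1,...,s_p,t_1,...,t_p⟩/(s_i t_j + t_j s_i = δ_{ij}), for any monotone subsequence I = (i_1 < ⋯ < i_n) of (1,...,p), writing s_I = s_{i_1}⋯s_{i_n} and t_{I^op} = t_{i_n}⋯t_{i_1}, one has t_{I^op} s_I = Σ_{J ⊆ I} (−1)^{|J|} s_J t_{J^op}, the sum over all monotone subsequences J of I. -/
/-- The defining relations of the "skew Weyl algebra"
`W = A⟨s₁,…,s_p,t₁,…,t_p⟩ / (sᵢtⱼ + tⱼsᵢ = δᵢⱼ)`: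
`Sum.inl i` plays the role of `sᵢ` (degree `1`) and `Sum.inr j` that of `tⱼ`
(degree `-1`). -/
inductive WeylRel (A : Type*) [CommRing A] (p : ℕ) :
    FreeAlgebra A (Fin p ⊕ Fin p) → FreeAlgebra A (Fin p ⊕ Fin p) → Prop
  | rel (i j : Fin p) : WeylRel A p
      (FreeAlgebra.ι A (Sum.inl i) * FreeAlgebra.ι A (Sum.inr j)
        + FreeAlgebra.ι A (Sum.inr j) * FreeAlgebra.ι A (Sum.inl i))
      (if i = j then 1 else 0)

/-- The skew Weyl algebra `W`. -/
abbrev SkewWeyl (A : Type*) [CommRing A] (p : ℕ) := RingQuot (WeylRel A p)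

/-- The generator `sᵢ` of `W`. -/
noncomputable def Ws (A : Type*) [CommRing A] (p : ℕ) (i : Fin p) : SkewWeyl A p :=
  RingQuot.mkAlgHom A (WeylRel A p) (FreeAlgebra.ι A (Sum.inl i))

/-- The generator `tᵢ` of `W`. -/
noncomputable def Wt (A : Type*) [CommRing A] (p : ℕ) (i : Fin p) : SkewWeyl A p :=
  RingQuot.mkAlgHom A (WeylRel A p) (FreeAlgebra.ι A (Sum.inr i))

/-- For a monotone subsequence `I = (i₁ < ⋯ < iₙ)` of `(1,…,p)` (encoded as a
`Finset`), the monomial `s_I = s_{i₁} ⋯ s_{iₙ}`. -/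
noncomputable def sProd (A : Type*) [CommRing A] (p : ℕ) (I : Finset (Fin p)) : SkewWeyl A p :=
  ((I.sort (· ≤ ·)).map (Ws A p)).prod

/-- The monomial `t_{I^op} = t_{iₙ} ⋯ t_{i₁}` (indices in decreasing order). -/
noncomputable def tProdRev (A : Type*) [CommRing A] (p : ℕ) (I : Finset (Fin p)) : SkewWeyl A p :=
  (((I.sort (· ≤ ·)).reverse).map (Wt A p)).prod

/-!
Write `I = {a} ∪ I'` with `a < I'`. Then `t_{I^op} s_I = t_{I'^op} (t_a s_a) s_{I'}` and
`t_a s_a = 1 - s_a t_a`. As `s_a` and `t_a` anticommute with every generator of index `≠ a`, moving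
`s_a` to the far left and `t_a` to the far right costs the sign `(-1)^|I'|` twice, so
`t_{I^op} s_I = t_{I'^op} s_{I'} - s_a (t_{I'^op} s_{I'}) t_a`. By induction, the second term
contributes exactly the subsets `J ∋ a`, each with its sign flipped.
-/

theorem mul_list_prod_of_anticommute {R : Type*} [Ring R] {x : R} {l : List R}
    (h : ∀ y ∈ l, x * y = -(y * x)) : x * l.prod = (-1) ^ l.length * (l.prod * x) := by
  induction l with
  | nil => simp
  | cons y l ih =>
    have ih := ih fun z hz => h z (List.mem_cons_of_mem y hz)
    rw [List.prod_cons, ← mul_assoc, h y List.mem_cons_self, neg_mul, mul_assoc, ih,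
      List.length_cons, pow_succ, ← ((Commute.neg_one_left y).pow_left _).left_comm,
      mul_neg_one, neg_mul]
    simp only [mul_assoc]

theorem list_prod_mul_of_anticommute {R : Type*} [Ring R] {x : R} {l : List R}
    (h : ∀ y ∈ l, y * x = -(x * y)) : l.prod * x = (-1) ^ l.length * (x * l.prod) := by
  have hx := mul_list_prod_of_anticommute fun y hy => neg_eq_iff_eq_neg.mp (h y hy).symm
  rw [hx, ← mul_assoc, ← pow_add, Even.neg_one_pow ⟨_, rfl⟩, one_mul]

section OrderedProd

variable {ι R : Type*} [LinearOrder ι] [Ring R]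

def ascProd (f : ι → R) (I : Finset ι) : R :=
  ((I.sort (· ≤ ·)).map f).prod

def descProd (f : ι → R) (I : Finset ι) : R :=
  ((I.sort (· ≤ ·)).reverse.map f).prod

theorem ascProd_insert_of_forall_lt (f : ι → R) {a : ι} {I : Finset ι} (hlt : ∀ b ∈ I, a < b) :
    ascProd f (insert a I) = f a * ascProd f I := by
  rw [ascProd, Finset.sort_insert _ (fun b hb => (hlt b hb).le) fun h => (hlt a h).false]
  simp [ascProd]

theorem descProd_insert_of_forall_lt (f : ι → R) {a : ι} {I : Finset ι} (hlt : ∀ b ∈ I, a < b) :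
    descProd f (insert a I) = descProd f I * f a := by
  rw [descProd, Finset.sort_insert _ (fun b hb => (hlt b hb).le) fun h => (hlt a h).false]
  simp [descProd]

theorem mul_ascProd_of_anticommute {f : ι → R} {x : R} {I : Finset ι}
    (h : ∀ b ∈ I, x * f b = -(f b * x)) : x * ascProd f I = (-1) ^ I.card * (ascProd f I * x) := by
  rw [ascProd, mul_list_prod_of_anticommute, List.length_map, Finset.length_sort]
  simp only [List.mem_map, Finset.mem_sort]
  rintro _ ⟨b, hb, rfl⟩
  exact h b hb

theorem descProd_mul_of_anticommute {f : ι → R} {x : R} {I : Finset ι}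
    (h : ∀ b ∈ I, f b * x = -(x * f b)) : descProd f I * x = (-1) ^ I.card * (x * descProd f I) := by
  rw [descProd, list_prod_mul_of_anticommute, List.length_map, List.length_reverse,
    Finset.length_sort]
  simp only [List.mem_map, List.mem_reverse, Finset.mem_sort]
  rintro _ ⟨b, hb, rfl⟩
  exact h b hb

variable {s t : ι → R}

theorem descProd_insert_mul_ascProd_insert
    (hst : ∀ i j, s i * t j + t j * s i = if i = j then 1 else 0) {a : ι} {I : Finset ι}
    (hlt : ∀ b ∈ I, a < b) :
    descProd t (insert a I) * ascProd s (insert a I)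
      = descProd t I * ascProd s I - s a * (descProd t I * ascProd s I) * t a := by
  have hta : ∀ b ∈ I, t a * s b = -(s b * t a) := fun b hb =>
    eq_neg_of_add_eq_zero_right <| by simpa [(hlt b hb).ne'] using hst b a
  have hsa : ∀ b ∈ I, t b * s a = -(s a * t b) := fun b hb =>
    eq_neg_of_add_eq_zero_right <| by simpa [(hlt b hb).ne] using hst a b
  have haa : t a * s a = 1 - s a * t a := eq_sub_of_add_eq' <| by simpa using hst a a
  have hc : ∀ x : R, Commute ((-1) ^ I.card) x := fun x => (Commute.neg_one_left x).pow_left _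
  have hcc : (-1 : R) ^ I.card * (-1) ^ I.card = 1 := by rw [← pow_add, Even.neg_one_pow ⟨_, rfl⟩]
  rw [ascProd_insert_of_forall_lt s hlt, descProd_insert_of_forall_lt t hlt]
  calc descProd t I * t a * (s a * ascProd s I)
      = descProd t I * ascProd s I - descProd t I * s a * (t a * ascProd s I) := by
        rw [mul_assoc, ← mul_assoc (t a), haa]; noncomm_ring
    _ = descProd t I * ascProd s I
          - (-1) ^ I.card * (s a * descProd t I) * ((-1) ^ I.card * (ascProd s I * t a)) := by
        rw [descProd_mul_of_anticommute hsa, mul_ascProd_of_anticommute hta]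
    _ = descProd t I * ascProd s I - s a * (descProd t I * ascProd s I) * t a := by
        rw [mul_assoc, ← (hc _).left_comm, ← mul_assoc, hcc, one_mul]
        simp only [mul_assoc]

theorem descProd_mul_ascProd_eq_sum
    (hst : ∀ i j, s i * t j + t j * s i = if i = j then 1 else 0) (I : Finset ι) :
    descProd t I * ascProd s I =
      ∑ J ∈ I.powerset, (-1 : R) ^ J.card * (ascProd s J * descProd t J) := by
  induction I using Finset.induction_on_min with
  | empty => simp [ascProd, descProd]
  | insert a I hlt ih =>
    rw [descProd_insert_mul_ascProd_insert hst hlt, ih,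
      Finset.sum_powerset_insert fun h => (hlt a h).false, Finset.mul_sum, Finset.sum_mul,
      sub_eq_add_neg, ← Finset.sum_neg_distrib]
    congr 1
    refine Finset.sum_congr rfl fun J hJ => ?_
    have hltJ : ∀ b ∈ J, a < b := fun b hb => hlt b (Finset.mem_powerset.mp hJ hb)
    rw [ascProd_insert_of_forall_lt s hltJ, descProd_insert_of_forall_lt t hltJ,
      Finset.card_insert_of_notMem fun h => (hltJ a h).false, pow_succ,
      ← ((Commute.neg_one_left (s a)).pow_left J.card).left_comm, mul_neg_one, neg_mul]
    simp only [mul_assoc]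

end OrderedProd

theorem Ws_mul_Wt_add_Wt_mul_Ws {A : Type*} [CommRing A] {p : ℕ} (i j : Fin p) :
    Ws A p i * Wt A p j + Wt A p j * Ws A p i = if i = j then 1 else 0 := by
  have h := RingQuot.mkAlgHom_rel A (WeylRel.rel (A := A) (p := p) i j)
  simpa [Ws, Wt, apply_ite (RingQuot.mkAlgHom A (WeylRel A p))] using h

/-- In `W`, for any monotone subsequence `I` of `(1,…,p)`,
`t_{I^op} s_I = Σ_{J ⊆ I} (−1)^{|J|} s_J t_{J^op}`. -/
theorem skewWeyl_tProdRev_mul_sProd (A : Type*) [CommRing A] (p : ℕ) (I : Finset (Fin p)) :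
    tProdRev A p I * sProd A p I =
      ∑ J ∈ I.powerset, (-1 : SkewWeyl A p) ^ J.card * (sProd A p J * tProdRev A p J) := by
  -- `RingQuot` carries its own `Neg` and `Mul` instances, which block rewriting with generic
  -- ring lemmas; hence the computation above is done in an arbitrary ring.
  exact descProd_mul_ascProd_eq_sum Ws_mul_Wt_add_Wt_mul_Ws I
end

section
/- Let W = A⟨s_1,...,s_p,t_1,...,t_p⟩/(s_i t_j + t_j s_i = δ_{ij}) and let F = {F_i}_{i≥0} be a graded left W-module (s_i raising degree by 1, t_i lowering degree by 1, F_i = 0 for i < 0) with F_0 ≠ 0. Then F_i ≠ 0 for every 0 ≤ i ≤ p. -/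
/-!
A nonzero `x ∈ F₀` is killed by every `tⱼ`, since `tⱼ x` would have degree `-1`.
Put `y₀ = x` and `y_{k+1} = s_k y_k ∈ F_{k+1}`. If `tⱼ y_k = 0` for all `j ≥ k`, the relation
`tⱼ sᵢ = δᵢⱼ - sᵢ tⱼ` gives `t_k y_{k+1} = y_k` and `tⱼ y_{k+1} = 0` for `j > k`;
so `y_{k+1} ≠ 0` whenever `y_k ≠ 0`, and the induction runs up to `k = p`.
-/

section SkewWeyl

variable {A : Type*} [CommRing A] {p : ℕ}

theorem Wt_mul_Ws (i j : Fin p) :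
    Wt A p j * Ws A p i = (if i = j then 1 else 0) - Ws A p i * Wt A p j := by
  have h := RingQuot.mkAlgHom_rel A (WeylRel.rel (A := A) (p := p) i j)
  rw [map_add, map_mul, map_mul] at h
  rw [eq_sub_iff_add_eq, add_comm]
  exact h.trans (by split_ifs <;> simp)

variable {M : Type*} [AddCommGroup M] [Module (SkewWeyl A p) M]

theorem Wt_smul_Ws_smul (i j : Fin p) (y : M) :
    Wt A p j • Ws A p i • y = (if i = j then y else 0) - Ws A p i • Wt A p j • y := by
  rw [← mul_smul, Wt_mul_Ws, sub_smul, mul_smul, ite_smul, one_smul, zero_smul]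

theorem Wt_smul_Ws_smul_of_Wt_smul_eq_zero {i j : Fin p} {y : M} (hy : Wt A p j • y = 0) :
    Wt A p j • Ws A p i • y = if i = j then y else 0 := by
  rw [Wt_smul_Ws_smul, hy, smul_zero, sub_zero]

theorem Ws_smul_ne_zero_of_Wt_smul_eq_zero {i : Fin p} {y : M} (hy : y ≠ 0)
    (hty : Wt A p i • y = 0) : Ws A p i • y ≠ 0 := by
  intro h
  have hback : Wt A p i • Ws A p i • y = y := by
    rw [Wt_smul_Ws_smul_of_Wt_smul_eq_zero hty, if_pos rfl]
  exact hy (by rw [← hback, h, smul_zero])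

variable [Module A M]

theorem exists_mem_ne_zero_of_Wt_smul_eq_zero (ℱ : ℤ → Submodule A M)
    (hs : ∀ (i : Fin p) (n : ℤ), ∀ x ∈ ℱ n, Ws A p i • x ∈ ℱ (n + 1))
    {x : M} (hx : x ∈ ℱ 0) (hx0 : x ≠ 0) (htx : ∀ j : Fin p, Wt A p j • x = 0) :
    ∀ k : ℕ, k ≤ p → ∃ y ∈ ℱ k, y ≠ 0 ∧ ∀ j : Fin p, k ≤ (j : ℕ) → Wt A p j • y = 0
  | 0, _ => ⟨x, hx, hx0, fun j _ => htx j⟩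
  | k + 1, hk => by
    obtain ⟨y, hy, hy0, hty⟩ :=
      exists_mem_ne_zero_of_Wt_smul_eq_zero ℱ hs hx hx0 htx k (Nat.le_of_succ_le hk)
    let i : Fin p := ⟨k, hk⟩
    refine ⟨Ws A p i • y, by exact_mod_cast hs i k y hy,
      Ws_smul_ne_zero_of_Wt_smul_eq_zero hy0 (hty i le_rfl), fun j hj => ?_⟩
    have hij : i ≠ j := Fin.ne_of_val_ne (by simp only [i]; omega)
    rw [Wt_smul_Ws_smul_of_Wt_smul_eq_zero (hty j (by omega)), if_neg hij]

end SkewWeyl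

theorem skewWeyl_graded_module_nonzero_up_to_p_general
    (A : Type*) [CommRing A] (p : ℕ)
    (M : Type*) [AddCommGroup M] [Module A M] [Module (SkewWeyl A p) M]
    (ℱ : ℤ → Submodule A M)
    (hneg : ∀ n : ℤ, n < 0 → ℱ n = ⊥)
    (hs : ∀ (i : Fin p) (n : ℤ), ∀ x ∈ ℱ n, Ws A p i • x ∈ ℱ (n + 1))
    (ht : ∀ (i : Fin p) (n : ℤ), ∀ x ∈ ℱ n, Wt A p i • x ∈ ℱ (n - 1))
    (h0 : ℱ 0 ≠ ⊥) :
    ∀ i : ℕ, i ≤ p → ℱ i ≠ ⊥ := by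
  obtain ⟨x, hx, hx0⟩ := (Submodule.ne_bot_iff _).1 h0
  have htx : ∀ j : Fin p, Wt A p j • x = 0 := fun j => by
    simpa only [hneg (0 - 1) (by norm_num), Submodule.mem_bot] using ht j 0 x hx
  intro k hk
  obtain ⟨y, hy, hy0, -⟩ := exists_mem_ne_zero_of_Wt_smul_eq_zero ℱ hs hx hx0 htx k hk
  exact (Submodule.ne_bot_iff _).2 ⟨y, hy, hy0⟩

/-- Let `F = {Fᵢ}_{i ≥ 0}` be a graded left `W`-module (with `sᵢ`
raising and `tᵢ` lowering degrees by one, `Fᵢ = 0` for `i < 0`) over a nonzero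
commutative ring `A`, with `F₀ ≠ 0`.  Then `Fᵢ ≠ 0` for every `0 ≤ i ≤ p`. -/
theorem skewWeyl_graded_module_nonzero_up_to_p
    (A : Type*) [CommRing A] [Nontrivial A] (p : ℕ)
    (M : Type*) [AddCommGroup M] [Module A M] [Module (SkewWeyl A p) M]
    [IsScalarTower A (SkewWeyl A p) M]
    (ℱ : ℤ → Submodule A M) (hInternal : DirectSum.IsInternal ℱ)
    (hneg : ∀ n : ℤ, n < 0 → ℱ n = ⊥)
    (hs : ∀ (i : Fin p) (n : ℤ), ∀ x ∈ ℱ n, Ws A p i • x ∈ ℱ (n + 1))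
    (ht : ∀ (i : Fin p) (n : ℤ), ∀ x ∈ ℱ n, Wt A p i • x ∈ ℱ (n - 1))
    (h0 : ℱ 0 ≠ ⊥) :
    ∀ i : ℕ, i ≤ p → ℱ i ≠ ⊥ :=
  skewWeyl_graded_module_nonzero_up_to_p_general A p M ℱ hneg hs ht h0
end

section
/- Let W = A⟨s_1,...,s_p,t_1,...,t_p⟩/(s_i t_j + t_j s_i = δ_{ij}) and let E = A[s_1,...,s_p] be the exterior algebra on s_1,...,s_p, viewed as a left W-module where t_i acts as the graded derivation with t_i·s_j = δ_{ij}. If F is a graded left W-module with F_i = 0 for i < 0 and for i > p, and F_0 ≠ 0, then the natural map E ⊗_A F_0 → F, s_I ⊗ f ↦ s_I·f, is an isomorphism of graded left W-modules. -/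
/-- The `A`-linear map `F₀ → M`, `x ↦ s_I • x`. -/
noncomputable def sSmulMap (A : Type*) [CommRing A] (p : ℕ)
    (M : Type*) [AddCommGroup M] [Module A M] [Module (SkewWeyl A p) M]
    [IsScalarTower A (SkewWeyl A p) M]
    (N : Submodule A M) (I : Finset (Fin p)) : N →ₗ[A] M where
  toFun x := sProd A p I • (x : M)
  map_add' x y := by simp [smul_add]
  map_smul' a x := by
    simp only [Submodule.coe_smul, RingHom.id_apply]
    rw [← algebraMap_smul (SkewWeyl A p) a (x : M), smul_smul, ← Algebra.commutes,
      ← smul_smul, algebraMap_smul]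

section CAR

open List AddSubgroup

variable {R : Type*} [Ring R] {ι : Type*} [DecidableEq ι]

/-- Canonical anticommutation relations. -/
def IsCAR (a b : ι → R) : Prop :=
  ∀ i j, a i * b j + b j * a i = if i = j then 1 else 0

namespace IsCAR

variable {a b : ι → R}

theorem symm (h : IsCAR a b) : IsCAR b a := fun i j => by
  rw [add_comm, h j i]
  simp only [eq_comm]

theorem mul_add_mul_self (h : IsCAR a b) (i : ι) : a i * b i + b i * a i = 1 := by
  simpa using h i i

theorem mul_eq_neg_of_ne (h : IsCAR a b) {i j : ι} (hij : i ≠ j) : a i * b j = -(b j * a i) :=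
  eq_neg_of_add_eq_zero_left (by simpa [hij] using h i j)

theorem mul_mul_eq (h : IsCAR a b) (k i j : ι) :
    a k * (b i * b j) =
      (if k = i then b j else 0) - (if k = j then b i else 0) + b i * b j * a k := by
  have hki : a k * b i = (if k = i then 1 else 0) - b i * a k := eq_sub_of_add_eq (h k i)
  have hkj : a k * b j = (if k = j then 1 else 0) - b j * a k := eq_sub_of_add_eq (h k j)
  rw [← mul_assoc, hki, sub_mul, mul_assoc (b i), hkj]
  split_ifs <;> noncomm_ring

theorem commute_mul_self (h : IsCAR a b) (k i : ι) : Commute (a k) (b i * b i) := by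
  simp [Commute, SemiconjBy, h.mul_mul_eq]

theorem commute_anticomm (h : IsCAR a b) (k i j : ι) :
    Commute (a k) (b i * b j + b j * b i) := by
  simp only [Commute, SemiconjBy, mul_add, add_mul, h.mul_mul_eq]
  abel

variable {M : Type*} [AddCommGroup M] [Module R M]

theorem smul_smul_eq_sub (h : IsCAR a b) (i : ι) (y : M) : b i • a i • y = y - a i • b i • y := by
  rw [eq_sub_iff_add_eq', ← mul_smul, ← mul_smul, ← add_smul, h.mul_add_mul_self, one_smul]

theorem smul_prod_smul_eq_zero_of_notMem (h : IsCAR a b) {i : ι} {x : M} (hx : b i • x = 0) :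
    ∀ {l : List ι}, i ∉ l → b i • (l.map a).prod • x = 0
  | [], _ => by simpa using hx
  | c :: l, hi => by
    obtain ⟨hic, hil⟩ := ne_and_not_mem_of_not_mem_cons hi
    rw [map_cons, prod_cons, mul_smul, smul_smul, h.symm.mul_eq_neg_of_ne hic, neg_smul,
      mul_smul, h.smul_prod_smul_eq_zero_of_notMem hx hil, smul_zero, neg_zero]

theorem prod_reverse_smul_prod_smul_of_nodup (h : IsCAR a b) {x : M} (hx : ∀ i, b i • x = 0) :
    ∀ {l : List ι}, l.Nodup → (l.reverse.map b).prod • (l.map a).prod • x = x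
  | [], _ => by simp
  | c :: l, hl => by
    rw [nodup_cons] at hl
    simp only [reverse_cons, map_append, map_cons, map_nil, prod_append, prod_cons, prod_nil,
      mul_one, mul_smul, h.smul_smul_eq_sub, h.smul_prod_smul_eq_zero_of_notMem (hx c) hl.1,
      smul_zero, sub_zero, h.prod_reverse_smul_prod_smul_of_nodup hx hl.2]

theorem smul_prod_smul_mem_zmultiples_erase (h : IsCAR a b) {x : M} (hx : ∀ i, b i • x = 0)
    (i : ι) : ∀ {l : List ι}, l.Nodup →
      b i • (l.map a).prod • x ∈ zmultiples (((l.erase i).map a).prod • x)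
  | [], _ => by simp [hx]
  | c :: l, hl => by
    rw [nodup_cons] at hl
    by_cases hic : i = c
    · subst hic
      simp only [erase_cons_head, map_cons, prod_cons, mul_smul, h.smul_smul_eq_sub,
        h.smul_prod_smul_eq_zero_of_notMem (hx i) hl.1, smul_zero, sub_zero]
      exact mem_zmultiples _
    · obtain ⟨k, hk⟩ := mem_zmultiples_iff.mp (h.smul_prod_smul_mem_zmultiples_erase hx i hl.2)
      rw [erase_cons_tail (by simpa using Ne.symm hic)]
      simp only [map_cons, prod_cons, mul_smul]
      rw [← mul_smul (b i), h.symm.mul_eq_neg_of_ne hic, neg_smul, mul_smul, ← hk,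
        smul_comm (a c) k, ← neg_smul]
      exact zsmul_mem (mem_zmultiples _) _

theorem prod_reverse_smul_prod_smul_eq_zero_of_not_subset (h : IsCAR a b) {x : M}
    (hx : ∀ i, b i • x = 0) : ∀ {l₁ l₂ : List ι}, l₂.Nodup → ¬ l₁ ⊆ l₂ →
      (l₁.reverse.map b).prod • (l₂.map a).prod • x = 0
  | [], _, _, hsub => absurd (nil_subset _) hsub
  | c :: l₁, l₂, hl₂, hsub => by
    simp only [reverse_cons, map_append, map_cons, map_nil, prod_append, prod_cons, prod_nil,
      mul_one, mul_smul]
    by_cases hc : c ∈ l₂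
    · obtain ⟨k, hk⟩ := mem_zmultiples_iff.mp (h.smul_prod_smul_mem_zmultiples_erase hx c hl₂)
      have hsub' : ¬ l₁ ⊆ l₂.erase c := fun h' =>
        hsub (cons_subset.mpr ⟨hc, List.Subset.trans h' erase_subset⟩)
      rw [← hk, smul_comm _ k,
        h.prod_reverse_smul_prod_smul_eq_zero_of_not_subset hx (hl₂.erase c) hsub', smul_zero]
    · rw [h.smul_prod_smul_eq_zero_of_notMem (hx c) hc, smul_zero]

theorem eq_zero_of_sum_prod_smul_eq_zero [Fintype ι] (h : IsCAR a b)
    (L : Finset ι → List ι) (hL : ∀ J, (L J).Nodup) (hLJ : ∀ J, (L J).toFinset = J)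
    {v : Finset ι → M} (hv : ∀ J i, b i • v J = 0) (hsum : ∑ J, ((L J).map a).prod • v J = 0)
    (I : Finset ι) : v I = 0 := by
  have hmem : ∀ J i, i ∈ L J ↔ i ∈ J := fun J i => by rw [← mem_toFinset, hLJ]
  refine Finset.strongDownwardInduction (p := fun I => v I = 0) (fun I ih _ => ?_) I
    (Finset.card_le_univ I)
  have hI := congrArg (((L I).reverse.map b).prod • ·) hsum
  simp only [smul_zero, Finset.smul_sum] at hI
  rw [Finset.sum_eq_single I, h.prod_reverse_smul_prod_smul_of_nodup (hv I) (hL I)] at hI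
  · exact hI
  · intro J _ hJI
    by_cases hIJ : I ⊆ J
    · rw [ih (Finset.card_le_univ J) (Finset.ssubset_iff_subset_ne.mpr ⟨hIJ, hJI.symm⟩), smul_zero,
        smul_zero]
    · refine h.prod_reverse_smul_prod_smul_eq_zero_of_not_subset (hv J) (hL J) fun hsub => ?_
      exact hIJ fun i hi => (hmem J i).mp (hsub ((hmem I i).mpr hi))
  · exact fun hI => absurd (Finset.mem_univ I) hI

theorem smul_prod_mul_smul_eq_zero_of_mem (h : IsCAR a b)
    (hsq : ∀ i (x : M), (b i * b i) • x = 0)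
    (hanti : ∀ i j (x : M), (b i * b j + b j * b i) • x = 0) {k : ι} (x : M) :
    ∀ {l : List ι}, k ∈ l → b k • (l.map fun i => b i * a i).prod • x = 0
  | c :: l, hk => by
    simp only [List.map_cons, List.prod_cons, mul_smul]
    by_cases hkc : k = c
    · rw [hkc, ← mul_smul (b c) (b c), hsq]
    · have hbb := hanti k c (a c • (l.map fun i => b i * a i).prod • x)
      rw [add_smul, mul_smul, mul_smul, add_eq_zero_iff_eq_neg] at hbb
      rw [hbb, ← mul_smul (b k) (a c), h.symm.mul_eq_neg_of_ne hkc, neg_smul, mul_smul,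
        h.smul_prod_mul_smul_eq_zero_of_mem hsq hanti x ((List.mem_cons.mp hk).resolve_left hkc),
        smul_zero, neg_zero, smul_zero, neg_zero]

end IsCAR

end CAR

section ExteriorRelations

open List AddSubgroup

variable {R : Type*} [Ring R] {ι : Type*} {M : Type*} [AddCommGroup M] [Module R M] {a : ι → R}

theorem prod_smul_mem_zmultiples_of_perm (hanti : ∀ i j (x : M), (a i * a j + a j * a i) • x = 0)
    {l m : List ι} (h : l.Perm m) (x : M) :
    (l.map a).prod • x ∈ zmultiples ((m.map a).prod • x) := by
  induction h with
  | nil => exact mem_zmultiples _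
  | cons c _ ih =>
    obtain ⟨k, hk⟩ := mem_zmultiples_iff.mp ih
    simp only [map_cons, prod_cons, mul_smul, ← hk, smul_comm (a c) k]
    exact zsmul_mem (mem_zmultiples _) k
  | swap c d l =>
    have hdc := hanti d c ((l.map a).prod • x)
    rw [add_smul, mul_smul, mul_smul, add_eq_zero_iff_eq_neg] at hdc
    simp only [map_cons, prod_cons, mul_smul, hdc]
    exact neg_mem (mem_zmultiples _)
  | trans _ _ ih₁ ih₂ => exact zmultiples_le_of_mem ih₂ ih₁

theorem prod_smul_eq_zero_of_not_nodup (hsq : ∀ i (x : M), (a i * a i) • x = 0)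
    (hanti : ∀ i j (x : M), (a i * a j + a j * a i) • x = 0) {l : List ι} (hl : ¬ l.Nodup)
    (x : M) : (l.map a).prod • x = 0 := by
  obtain ⟨i, hi⟩ : ∃ i, [i, i].Sublist l := by simpa [nodup_iff_sublist] using hl
  obtain ⟨m, hm⟩ := hi.exists_perm_append
  obtain ⟨k, hk⟩ := mem_zmultiples_iff.mp (prod_smul_mem_zmultiples_of_perm hanti hm x)
  rw [← hk, cons_append, cons_append, nil_append, map_cons, map_cons, prod_cons, prod_cons,
    ← mul_assoc, mul_smul, hsq, smul_zero]

theorem prod_smul_mem_zmultiples_of_toFinset_eq [DecidableEq ι]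
    (hsq : ∀ i (x : M), (a i * a i) • x = 0)
    (hanti : ∀ i j (x : M), (a i * a j + a j * a i) • x = 0) {l m : List ι} (hm : m.Nodup)
    (h : l.toFinset = m.toFinset) (x : M) :
    (l.map a).prod • x ∈ zmultiples ((m.map a).prod • x) := by
  by_cases hl : l.Nodup
  · exact prod_smul_mem_zmultiples_of_perm hanti (perm_of_nodup_nodup_toFinset_eq hl hm h) x
  · rw [prod_smul_eq_zero_of_not_nodup hsq hanti hl]
    exact zero_mem _

end ExteriorRelations

section Grading

variable {R : Type*} [Ring R] {ι : Type*} [Fintype ι] {M : Type*} [AddCommGroup M] [Module R M]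
  {S : Type*} [Semiring S] [Module S M]

structure IsCARGrading (a b : ι → R) (ℱ : ℤ → Submodule S M) : Prop where
  iSup_eq_top : iSup ℱ = ⊤
  eq_bot : ∀ n : ℤ, n < 0 ∨ (Fintype.card ι : ℤ) < n → ℱ n = ⊥
  smul_mem_add_one : ∀ i n, ∀ x ∈ ℱ n, a i • x ∈ ℱ (n + 1)
  smul_mem_sub_one : ∀ i n, ∀ x ∈ ℱ n, b i • x ∈ ℱ (n - 1)

namespace IsCARGrading

variable {a b : ι → R} {ℱ : ℤ → Submodule S M} (hF : IsCARGrading a b ℱ)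
include hF

theorem flip : IsCARGrading b a (fun n => ℱ (Fintype.card ι - n)) where
  iSup_eq_top := by
    rw [← hF.iSup_eq_top]
    exact Function.Surjective.iSup_comp (f := fun n : ℤ => (Fintype.card ι : ℤ) - n)
      (fun n => ⟨Fintype.card ι - n, sub_sub_cancel _ _⟩) ℱ
  eq_bot n hn := hF.eq_bot _ (by omega)
  smul_mem_add_one i n x hx := by
    simpa [sub_sub] using hF.smul_mem_sub_one i _ x hx
  smul_mem_sub_one i n x hx := by
    simpa [sub_add] using hF.smul_mem_add_one i _ x hx

theorem eq_zero_of_mem {n : ℤ} {x : M} (hx : x ∈ ℱ n) (hn : n < 0 ∨ (Fintype.card ι : ℤ) < n) :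
    x = 0 := by
  rwa [hF.eq_bot n hn, Submodule.mem_bot] at hx

theorem smul_eq_zero_of_mem_zero {x : M} (hx : x ∈ ℱ 0) (i : ι) : b i • x = 0 :=
  hF.eq_zero_of_mem (hF.smul_mem_sub_one i 0 x hx) (Or.inl (by norm_num))

theorem prod_smul_mem {n : ℤ} {x : M} (hx : x ∈ ℱ n) (l : List ι) :
    (l.map a).prod • x ∈ ℱ (n + l.length) := by
  induction l with
  | nil => simpa using hx
  | cons c l ih =>
    simpa [mul_smul, add_assoc, add_comm (1 : ℤ)] using hF.smul_mem_add_one c _ _ ih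

theorem mul_smul_mem {n : ℤ} {x : M} (hx : x ∈ ℱ n) (i j : ι) : (b i * b j) • x ∈ ℱ (n - 2) := by
  simpa [mul_smul, sub_sub, one_add_one_eq_two] using
    hF.smul_mem_sub_one i _ _ (hF.smul_mem_sub_one j n x hx)

theorem prod_mul_smul_mem {n : ℤ} {x : M} (hx : x ∈ ℱ n) (l : List ι) :
    (l.map fun i => b i * a i).prod • x ∈ ℱ n := by
  induction l with
  | nil => simpa using hx
  | cons c l ih => simpa [mul_smul] using hF.smul_mem_sub_one c _ _ (hF.smul_mem_add_one c _ _ ih)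

variable [DecidableEq ι] (hab : IsCAR a b)
include hab

theorem eq_zero_of_forall_smul_eq_zero_of_pos {n : ℤ} (hn : 0 < n) {x : M} (hx : x ∈ ℱ n)
    (hb : ∀ i, b i • x = 0) : x = 0 := by
  have hl := (Finset.univ : Finset ι).nodup_toList
  have hax : ((Finset.univ.toList).map a).prod • x = 0 :=
    hF.eq_zero_of_mem (hF.prod_smul_mem hx _) (Or.inr (by simpa using hn))
  rw [← hab.prod_reverse_smul_prod_smul_of_nodup hb hl, hax, smul_zero]

theorem eq_zero_of_forall_smul_eq_zero_of_lt_card {n : ℤ} (hn : n < Fintype.card ι) {x : M}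
    (hx : x ∈ ℱ n) (ha : ∀ i, a i • x = 0) : x = 0 :=
  hF.flip.eq_zero_of_forall_smul_eq_zero_of_pos hab.symm (sub_pos.mpr hn)
    (by rwa [sub_sub_cancel]) ha

/-- Descending induction on the degree: `r • x` has degree below `card ι` and is killed by
every `aᵢ`, since `aᵢ r x = r aᵢ x` and `aᵢ x` has higher degree. -/
theorem smul_eq_zero_of_commute {r : R} {d : ℤ} (hd : 0 < d)
    (hr : ∀ n, ∀ x ∈ ℱ n, r • x ∈ ℱ (n - d)) (hcomm : ∀ i, Commute (a i) r) (x : M) :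
    r • x = 0 := by
  have hhom : ∀ n, ∀ x ∈ ℱ n, r • x = 0 := by
    intro n
    rcases le_or_gt n (Fintype.card ι + 1) with hn | hn
    · induction n, hn using Int.leInductionDown with
      | base => intro x hx; rw [hF.eq_zero_of_mem hx (Or.inr (by omega)), smul_zero]
      | pred n hn ih =>
        intro x hx
        refine hF.eq_zero_of_forall_smul_eq_zero_of_lt_card hab (by omega) (hr _ x hx) fun i => ?_
        rw [← mul_smul, (hcomm i).eq, mul_smul, ih _ (by simpa using hF.smul_mem_add_one i _ x hx)]
    · intro x hx; rw [hF.eq_zero_of_mem hx (Or.inr (by omega)), smul_zero]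
  exact Submodule.iSup_induction ℱ (motive := fun x => r • x = 0)
    (hF.iSup_eq_top ▸ Submodule.mem_top) hhom (smul_zero r)
    fun x y hx hy => by rw [smul_add, hx, hy, add_zero]

theorem mul_self_smul_eq_zero (i : ι) (x : M) : (b i * b i) • x = 0 :=
  hF.smul_eq_zero_of_commute hab two_pos (fun _ _ hx => hF.mul_smul_mem hx i i)
    (fun k => hab.commute_mul_self k i) x

theorem anticomm_smul_eq_zero (i j : ι) (x : M) : (b i * b j + b j * b i) • x = 0 :=
  hF.smul_eq_zero_of_commute hab two_pos
    (fun _ _ hx => by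
      rw [add_smul]; exact add_mem (hF.mul_smul_mem hx i j) (hF.mul_smul_mem hx j i))
    (fun k => hab.commute_anticomm k i j) x

theorem sub_prod_mul_smul_mem {G : AddSubgroup M} {n : ℤ}
    (hG : ∀ i, ∀ y ∈ ℱ n, a i • b i • y ∈ G) (l : List ι) {x : M} (hx : x ∈ ℱ n) :
    x - (l.map fun i => b i * a i).prod • x ∈ G := by
  induction l with
  | nil => simp
  | cons c l ih =>
    set y := (l.map fun i => b i * a i).prod • x
    have key : x - (b c * a c * (l.map fun i => b i * a i).prod) • x = (x - y) + a c • b c • y := by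
      rw [mul_smul, mul_smul, hab.smul_smul_eq_sub]; abel
    simp only [List.map_cons, List.prod_cons, key]
    exact add_mem ih (hG c _ (hF.prod_mul_smul_mem hx l))

/-- `x - ∏ bᵢaᵢ x` lies in the span of the `aᵢbᵢ`-images, while `∏ bᵢaᵢ x` has the degree of
`x` and is killed by every `bₖ`. -/
theorem mem_of_forall_smul_mem (G : AddSubgroup M) (h0 : ∀ x ∈ ℱ 0, x ∈ G)
    (hG : ∀ i, ∀ x ∈ G, a i • x ∈ G) (x : M) : x ∈ G := by
  have hhom : ∀ n, ∀ x ∈ ℱ n, x ∈ G := by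
    intro n
    rcases lt_or_ge n 0 with hn | hn
    · intro x hx; rw [hF.eq_zero_of_mem hx (Or.inl hn)]; exact zero_mem G
    induction n, hn using Int.leInduction with
    | base => exact h0
    | succ n hn ih =>
      intro x hx
      have hdiff := hF.sub_prod_mul_smul_mem hab (G := G)
        (fun i y hy => hG i _ (ih _ (by simpa using hF.smul_mem_sub_one i _ y hy)))
        Finset.univ.toList hx
      rwa [hF.eq_zero_of_forall_smul_eq_zero_of_pos hab (by omega) (hF.prod_mul_smul_mem hx _)
        (fun k => hab.smul_prod_mul_smul_eq_zero_of_mem (hF.mul_self_smul_eq_zero hab)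
          (hF.anticomm_smul_eq_zero hab) x (Finset.mem_toList.mpr (Finset.mem_univ k))),
        sub_zero] at hdiff
  exact Submodule.iSup_induction ℱ (motive := (· ∈ G)) (hF.iSup_eq_top ▸ Submodule.mem_top) hhom
    (zero_mem G) fun _ _ => add_mem

end IsCARGrading

end Grading

section SkewWeyl

variable {A : Type*} [CommRing A] {p : ℕ}

theorem isCAR_Ws_Wt : IsCAR (Ws A p) (Wt A p) := fun i j => by
  have h := RingQuot.mkAlgHom_rel A (WeylRel.rel (A := A) (p := p) i j)
  simp only [map_add, map_mul] at h
  rw [Ws, Wt, h]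
  split <;> simp

variable {M : Type*} [AddCommGroup M] [Module A M] [Module (SkewWeyl A p) M]
  [IsScalarTower A (SkewWeyl A p) M]

theorem sSmulMap_apply (N : Submodule A M) (I : Finset (Fin p)) (x : N) :
    sSmulMap A p M N I x = sProd A p I • (x : M) := rfl

theorem Ws_smul_mem_range_toModule_sSmulMap
    (hsq : ∀ i (x : M), (Ws A p i * Ws A p i) • x = 0)
    (hanti : ∀ i j (x : M), (Ws A p i * Ws A p j + Ws A p j * Ws A p i) • x = 0)
    {N : Submodule A M} (i : Fin p) {z : M}
    (hz : z ∈ LinearMap.range (DirectSum.toModule A (Finset (Fin p)) M (sSmulMap A p M N))) :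
    Ws A p i • z ∈
      LinearMap.range (DirectSum.toModule A (Finset (Fin p)) M (sSmulMap A p M N)) := by
  obtain ⟨v, rfl⟩ := hz
  induction v using DirectSum.induction_on with
  | zero => simp
  | of I x =>
    obtain ⟨k, hk⟩ := AddSubgroup.mem_zmultiples_iff.mp
      (prod_smul_mem_zmultiples_of_toFinset_eq hsq hanti (l := i :: I.sort (· ≤ ·))
        ((insert i I).sort_nodup (· ≤ ·)) (by simp) (x : M))
    refine ⟨k • DirectSum.lof A _ _ (insert i I) x, ?_⟩
    rw [map_zsmul, ← DirectSum.lof_eq_of A, DirectSum.toModule_lof, DirectSum.toModule_lof,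
      sSmulMap_apply, sSmulMap_apply]
    simpa only [sProd, List.map_cons, List.prod_cons, mul_smul] using hk
  | add v w hv hw => rw [map_add, smul_add]; exact add_mem hv hw

end SkewWeyl

/-- `E ⊗_A F₀` is modelled as `⨁_{I ⊆ [p]} F₀` through the basis `{s_I}` of `E`. -/
theorem skewWeyl_structure_iso_general
    (A : Type*) [CommRing A] (p : ℕ)
    (M : Type*) [AddCommGroup M] [Module A M] [Module (SkewWeyl A p) M]
    [IsScalarTower A (SkewWeyl A p) M]
    (ℱ : ℤ → Submodule A M) (hInternal : DirectSum.IsInternal ℱ)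
    (hconc : ∀ n : ℤ, (n < 0 ∨ (p : ℤ) < n) → ℱ n = ⊥)
    (hs : ∀ (i : Fin p) (n : ℤ), ∀ x ∈ ℱ n, Ws A p i • x ∈ ℱ (n + 1))
    (ht : ∀ (i : Fin p) (n : ℤ), ∀ x ∈ ℱ n, Wt A p i • x ∈ ℱ (n - 1)) :
    Function.Bijective
      (DirectSum.toModule A (Finset (Fin p)) M (fun I => sSmulMap A p M (ℱ 0) I)) ∧
    ∀ (I : Finset (Fin p)) (x : ℱ 0), sProd A p I • (x : M) ∈ ℱ (I.card : ℤ) := by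
  have hab : IsCAR (Ws A p) (Wt A p) := isCAR_Ws_Wt
  have hF : IsCARGrading (Ws A p) (Wt A p) ℱ :=
    ⟨hInternal.submodule_iSup_eq_top, by simpa using hconc, hs, ht⟩
  set Φ := DirectSum.toModule A (Finset (Fin p)) M (fun I => sSmulMap A p M (ℱ 0) I)
  refine ⟨⟨?_, fun y => ?_⟩, fun I x => ?_⟩
  · refine (injective_iff_map_eq_zero Φ).mpr fun v hv => DFinsupp.ext fun I => Subtype.ext ?_
    refine hab.eq_zero_of_sum_prod_smul_eq_zero (fun J => J.sort (· ≤ ·))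
      (fun J => J.sort_nodup _) (fun J => J.sort_toFinset _) (v := fun J => (v J : M))
      (fun J => hF.smul_eq_zero_of_mem_zero (v J).2) ?_ I
    rw [← hv]
    conv_rhs => rw [← DirectSum.sum_univ_of v, map_sum]
    simp only [Φ, ← DirectSum.lof_eq_of A, DirectSum.toModule_lof, sSmulMap_apply]
    rfl
  · have hsq := hF.flip.mul_self_smul_eq_zero hab.symm
    have hanti := hF.flip.anticomm_smul_eq_zero hab.symm
    refine hF.mem_of_forall_smul_mem hab (LinearMap.range Φ).toAddSubgroup
      (fun x hx => ⟨DirectSum.lof A _ _ ∅ ⟨x, hx⟩, ?_⟩)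
      (fun i z hz => Ws_smul_mem_range_toModule_sSmulMap hsq hanti i hz) y
    simp [Φ, sSmulMap_apply, sProd]
  · have := hF.prod_smul_mem x.2 (I.sort (· ≤ ·))
    rwa [zero_add, Finset.length_sort] at this

/-- Let `F` be a graded left `W`-module concentrated in degrees
`0,…,p` with `F₀ ≠ 0`.  Identifying `E ⊗_A F₀` (where `E = Λ(s₁,…,s_p)` is the exterior
algebra, a left `W`-module) with `⨁_{I ⊆ [p]} F₀` via the basis `{s_I}`, the natural map
`E ⊗_A F₀ → F`, `s_I ⊗ f ↦ s_I • f`, is an isomorphism of graded left `W`-modules: it is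
bijective and sends the summand indexed by `I` into the graded piece of degree `|I|`
(`W`-equivariance holds by construction of the `W`-action on `E`). -/
theorem skewWeyl_structure_iso
    (A : Type*) [CommRing A] (p : ℕ)
    (M : Type*) [AddCommGroup M] [Module A M] [Module (SkewWeyl A p) M]
    [IsScalarTower A (SkewWeyl A p) M]
    (ℱ : ℤ → Submodule A M) (hInternal : DirectSum.IsInternal ℱ)
    (hconc : ∀ n : ℤ, (n < 0 ∨ (p : ℤ) < n) → ℱ n = ⊥)
    (hs : ∀ (i : Fin p) (n : ℤ), ∀ x ∈ ℱ n, Ws A p i • x ∈ ℱ (n + 1))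
    (ht : ∀ (i : Fin p) (n : ℤ), ∀ x ∈ ℱ n, Wt A p i • x ∈ ℱ (n - 1))
    (h0 : ℱ 0 ≠ ⊥) :
    Function.Bijective
      (DirectSum.toModule A (Finset (Fin p)) M (fun I => sSmulMap A p M (ℱ 0) I)) ∧
    ∀ (I : Finset (Fin p)) (x : ℱ 0), sProd A p I • (x : M) ∈ ℱ (I.card : ℤ) :=
  skewWeyl_structure_iso_general A p M ℱ hInternal hconc hs ht
end
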